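/- arXiv:math-ph/0009010 — 7 statements merged into one kernel-verified Lean document; each statement's English description precedes it below -/
import Mathlib

section
/- Let A be an associative unital algebra over ℝ, let m be a nonzero real scalar, and let K, G, D, Pₓ, Pₜ ∈ A satisfy (with [a,b] := ab − ba) the Schrödinger commutation relations [D,K] = 2K, [D,G] = G, [D,Pₓ] = −Pₓ, [D,Pₜ] = −2Pₜ, [Pₓ,K] = G, [Pₜ,K] = D, [Pₓ,G] = m·1, [Pₜ,G] = Pₓ, [G,K] = 0, [Pₜ,Pₓ] = 0. Define L₀ := Pₜ − (1/(2m))·Pₓ², R₀ := K − (1/(2m))·G², ρ₀ := D − (1/m)·G·Pₓ − (1/2)·1. Then L₀, R₀, ρ₀ form a standard sl(2) basis: [L₀,R₀] = ρ₀, [ρ₀,R₀] = 2R₀, and [L₀,ρ₀] = 2L₀. -/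
set_option maxHeartbeats 1000000 in
/-- In any associative unital ℝ-algebra in which `K, G, D, Px, Pt` satisfy the
Schrödinger commutation relations (with the central mass acting as the nonzero
scalar `m`), the subtracted elements `L₀ = Pt - Px²/(2m)`, `R₀ = K - G²/(2m)`,
`ρ₀ = D - G·Px/m - 1/2` form a standard sl(2) basis. -/
theorem schrodinger_subtracted_sl2 {A : Type*} [Ring A] [Algebra ℝ A]
    (m : ℝ) (hm : m ≠ 0) (K G D Px Pt : A)
    (hDK : D * K - K * D = 2 * K)
    (hDG : D * G - G * D = G)
    (hDPx : D * Px - Px * D = -Px)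
    (hDPt : D * Pt - Pt * D = -(2 * Pt))
    (hPxK : Px * K - K * Px = G)
    (hPtK : Pt * K - K * Pt = D)
    (hPxG : Px * G - G * Px = m • (1 : A))
    (hPtG : Pt * G - G * Pt = Px)
    (hGK : G * K - K * G = 0)
    (hPtPx : Pt * Px - Px * Pt = 0) :
    let L₀ : A := Pt - (1 / (2 * m)) • Px ^ 2
    let R₀ : A := K - (1 / (2 * m)) • G ^ 2
    let ρ₀ : A := D - (1 / m) • (G * Px) - (1 / 2 : ℝ) • (1 : A)
    L₀ * R₀ - R₀ * L₀ = ρ₀ ∧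
    ρ₀ * R₀ - R₀ * ρ₀ = 2 * R₀ ∧
    L₀ * ρ₀ - ρ₀ * L₀ = 2 * L₀ := by
  intro L₀ R₀ ρ₀
  have h2 : ∀ x : A, (2 : A) * x = (2 : ℝ) • x := fun x => by
    rw [Algebra.smul_def, map_ofNat]
  -- product-form rules
  have eDK : D * K = K * D + (2:ℝ) • K := by
    rw [sub_eq_iff_eq_add] at hDK; rw [hDK, h2]; abel
  have eDG : D * G = G * D + G := by
    rw [sub_eq_iff_eq_add] at hDG; rw [hDG]; abel
  have ePxD : Px * D = D * Px + Px := by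
    have h : Px * D - D * Px = Px := by rw [← neg_sub, hDPx, neg_neg]
    rw [sub_eq_iff_eq_add] at h; rw [h]; abel
  have ePtD : Pt * D = D * Pt + (2:ℝ) • Pt := by
    have h : Pt * D - D * Pt = 2 * Pt := by rw [← neg_sub, hDPt, neg_neg]
    rw [sub_eq_iff_eq_add] at h; rw [h, h2]; abel
  have ePxK : Px * K = K * Px + G := by
    rw [sub_eq_iff_eq_add] at hPxK; rw [hPxK]; abel
  have ePtK : Pt * K = K * Pt + D := by
    rw [sub_eq_iff_eq_add] at hPtK; rw [hPtK]; abel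
  have ePxG : Px * G = G * Px + m • (1:A) := by
    rw [sub_eq_iff_eq_add] at hPxG; rw [hPxG]; abel
  have ePtG : Pt * G = G * Pt + Px := by
    rw [sub_eq_iff_eq_add] at hPtG; rw [hPtG]; abel
  have eGK : G * K = K * G := by rwa [sub_eq_zero] at hGK
  have ePtPx : Pt * Px = Px * Pt := by rwa [sub_eq_zero] at hPtPx
  -- associated rules for right-nested products
  have eDK' : ∀ x : A, D * (K * x) = K * (D * x) + (2:ℝ) • (K * x) := fun x => by
    rw [← mul_assoc, eDK, add_mul, mul_assoc, smul_mul_assoc]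
  have eDG' : ∀ x : A, D * (G * x) = G * (D * x) + G * x := fun x => by
    rw [← mul_assoc, eDG, add_mul, mul_assoc]
  have ePxD' : ∀ x : A, Px * (D * x) = D * (Px * x) + Px * x := fun x => by
    rw [← mul_assoc, ePxD, add_mul, mul_assoc]
  have ePtD' : ∀ x : A, Pt * (D * x) = D * (Pt * x) + (2:ℝ) • (Pt * x) := fun x => by
    rw [← mul_assoc, ePtD, add_mul, mul_assoc, smul_mul_assoc]
  have ePxK' : ∀ x : A, Px * (K * x) = K * (Px * x) + G * x := fun x => by
    rw [← mul_assoc, ePxK, add_mul, mul_assoc]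
  have ePtK' : ∀ x : A, Pt * (K * x) = K * (Pt * x) + D * x := fun x => by
    rw [← mul_assoc, ePtK, add_mul, mul_assoc]
  have ePxG' : ∀ x : A, Px * (G * x) = G * (Px * x) + m • x := fun x => by
    rw [← mul_assoc, ePxG, add_mul, mul_assoc, smul_mul_assoc, one_mul]
  have ePtG' : ∀ x : A, Pt * (G * x) = G * (Pt * x) + Px * x := fun x => by
    rw [← mul_assoc, ePtG, add_mul, mul_assoc]
  have eGK' : ∀ x : A, G * (K * x) = K * (G * x) := fun x => by
    rw [← mul_assoc, eGK, mul_assoc]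
  have ePtPx' : ∀ x : A, Pt * (Px * x) = Px * (Pt * x) := fun x => by
    rw [← mul_assoc, ePtPx, mul_assoc]
  refine ⟨?_, ?_, ?_⟩ <;>
  · show _ = _
    (try unfold L₀); (try unfold R₀); (try unfold ρ₀)
    simp only [pow_two, h2, mul_sub, sub_mul, smul_mul_assoc, mul_smul_comm, mul_assoc,
      mul_add, add_mul, smul_add, smul_sub, smul_smul, mul_one, one_mul,
      eDK', eDG', ePxD', ePtD', ePxK', ePtK', ePxG', ePtG', eGK', ePtPx',
      eDK, eDG, ePxD, ePtD, ePxK, ePtK, ePxG, ePtG, eGK, ePtPx]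
    match_scalars <;> field_simp <;> ring
end

section
/- Let A be an associative unital algebra over ℝ, let m be a nonzero real scalar, and let K, G, D, Pₓ, Pₜ ∈ A satisfy (with [a,b] := ab − ba) the Schrödinger commutation relations [D,K] = 2K, [D,G] = G, [D,Pₓ] = −Pₓ, [D,Pₜ] = −2Pₜ, [Pₓ,K] = G, [Pₜ,K] = D, [Pₓ,G] = m·1, [Pₜ,G] = Pₓ, [G,K] = 0, [Pₜ,Pₓ] = 0. Define L₀ := Pₜ − (1/(2m))·Pₓ², R₀ := K − (1/(2m))·G², ρ₀ := D − (1/m)·G·Pₓ − (1/2)·1. Then each of L₀, R₀, ρ₀ commutes with both Pₓ and G: [L₀,Pₓ] = [L₀,G] = [R₀,Pₓ] = [R₀,G] = [ρ₀,Pₓ] = [ρ₀,G] = 0. -/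
/-- In any associative unital ℝ-algebra in which `K, G, D, Px, Pt` satisfy the
Schrödinger commutation relations (with the central mass acting as the nonzero
scalar `m`), the sl(2) triple `L₀ = Pt - Px²/(2m)`, `R₀ = K - G²/(2m)`,
`ρ₀ = D - G·Px/m - 1/2` commutes with the Heisenberg–Weyl elements `Px` and `G`. -/
theorem schrodinger_sl2_commutes_with_HW {A : Type*} [Ring A] [Algebra ℝ A]
    (m : ℝ) (hm : m ≠ 0) (K G D Px Pt : A)
    (hDK : D * K - K * D = 2 * K)
    (hDG : D * G - G * D = G)
    (hDPx : D * Px - Px * D = -Px)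
    (hDPt : D * Pt - Pt * D = -(2 * Pt))
    (hPxK : Px * K - K * Px = G)
    (hPtK : Pt * K - K * Pt = D)
    (hPxG : Px * G - G * Px = m • (1 : A))
    (hPtG : Pt * G - G * Pt = Px)
    (hGK : G * K - K * G = 0)
    (hPtPx : Pt * Px - Px * Pt = 0) :
    let L₀ : A := Pt - (1 / (2 * m)) • Px ^ 2
    let R₀ : A := K - (1 / (2 * m)) • G ^ 2
    let ρ₀ : A := D - (1 / m) • (G * Px) - (1 / 2 : ℝ) • (1 : A)
    (L₀ * Px - Px * L₀ = 0) ∧ (L₀ * G - G * L₀ = 0) ∧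
    (R₀ * Px - Px * R₀ = 0) ∧ (R₀ * G - G * R₀ = 0) ∧
    (ρ₀ * Px - Px * ρ₀ = 0) ∧ (ρ₀ * G - G * ρ₀ = 0) := by
  intro L₀ R₀ ρ₀
  have rPtPx : Pt * Px = Px * Pt := sub_eq_zero.mp hPtPx
  have rGK : G * K = K * G := sub_eq_zero.mp hGK
  have rPxG : Px * G = m • (1 : A) + G * Px := sub_eq_iff_eq_add.mp hPxG
  have rPxGg : ∀ x : A, Px * (G * x) = m • x + G * (Px * x) := by
    intro x
    rw [← mul_assoc, rPxG, add_mul, smul_mul_assoc, one_mul, mul_assoc]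
  have rPxK : Px * K = G + K * Px := sub_eq_iff_eq_add.mp hPxK
  have rDPx : D * Px = -Px + Px * D := sub_eq_iff_eq_add.mp hDPx
  have rDG : D * G = G + G * D := sub_eq_iff_eq_add.mp hDG
  have rPtG : Pt * G = Px + G * Pt := sub_eq_iff_eq_add.mp hPtG
  simp only [L₀, R₀, ρ₀, pow_two, sub_mul, mul_sub, smul_mul_assoc, mul_smul_comm,
    mul_assoc, mul_add, add_mul, mul_one, one_mul, smul_add, smul_smul, smul_sub,
    rPtPx, rPxG, rPxGg, rPxK, rGK, rDPx, rDG, rPtG, mul_neg, smul_neg]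
  refine ⟨?_, ?_, ?_, ?_, ?_, ?_⟩ <;> match_scalars <;> field_simp <;> ring
end

section
/- Let A be an associative unital algebra over ℝ, let c, m be real scalars with m ≠ 0, and let r₁, r₂, u₁, u₂ ∈ A satisfy the canonical commutation relations [uᵢ, rⱼ] = δᵢⱼ·1, [r₁,r₂] = 0, [u₁,u₂] = 0 (with [a,b] := ab − ba). Define the hat-representation operators P̂ₜ := c·u₁ + (m/2)·u₂² + (r₁u₁ + r₂u₂)u₁, K̂ := r₁, D̂ := c·1 + 2r₁u₁ + r₂u₂, P̂ₓ := m·u₂ + r₂u₁, Ĝ := r₂, and set ℛ₀ := r₁ − (1/(2m))·r₂². Then: (i) P̂ₜ − (1/(2m))·P̂ₓ² = (c − 1/2)·u₁ + ℛ₀·u₁², (ii) K̂ − (1/(2m))·Ĝ² = ℛ₀, (iii) D̂ − (1/m)·Ĝ·P̂ₓ − (1/2)·1 = (c − 1/2)·1 + 2·ℛ₀·u₁. -/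
/-! Normal-ordering `P̂ₓ² = (m u₂ + r₂ u₁)²` with `u₂ r₂ = r₂ u₂ + 1` produces the extra term
`m u₁`, which is the source of the shift `c ↦ c - 1/2`; the rest is collecting scalars. -/

theorem smul_add_mul_sq_of_sub_eq_one {R A : Type*} [CommRing R] [Ring A] [Algebra R A] (m : R)
    {r u₁ u₂ : A} (hu₁r : Commute u₁ r) (hu₂r : u₂ * r - r * u₂ = 1) (hu : Commute u₁ u₂) :
    (m • u₂ + r * u₁) ^ 2 = m ^ 2 • u₂ ^ 2 + m • u₁ + (2 * m) • (r * u₂ * u₁) + r ^ 2 * u₁ ^ 2 := by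
  have expand : (m • u₂ + r * u₁) ^ 2
      = m ^ 2 • u₂ ^ 2 + m • (u₂ * r * u₁) + m • (r * (u₁ * u₂)) + r * (u₁ * r) * u₁ := by
    simp only [sq, add_mul, mul_add, mul_smul_comm, smul_mul_assoc, mul_assoc]
    module
  have hu₂r' : u₂ * r = r * u₂ + 1 := by rw [← hu₂r]; abel
  rw [expand, hu₂r', hu.eq, hu₁r.eq]
  simp only [add_mul, one_mul, sq, mul_assoc]
  module

theorem schrodinger_hat_subtractions_general {A : Type*} [Ring A] [Algebra ℝ A]
    (c m : ℝ) (hm : m ≠ 0) (r₁ r₂ u₁ u₂ : A)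
    (h22 : u₂ * r₂ - r₂ * u₂ = 1)
    (h12 : u₁ * r₂ - r₂ * u₁ = 0)
    (huu : u₁ * u₂ - u₂ * u₁ = 0) :
    let Pt : A := c • u₁ + (m / 2) • u₂ ^ 2 + (r₁ * u₁ + r₂ * u₂) * u₁
    let K : A := r₁
    let D : A := c • (1 : A) + 2 * (r₁ * u₁) + r₂ * u₂
    let Px : A := m • u₂ + r₂ * u₁
    let G : A := r₂
    let R₀ : A := r₁ - (1 / (2 * m)) • r₂ ^ 2
    (Pt - (1 / (2 * m)) • Px ^ 2 = (c - 1 / 2) • u₁ + R₀ * u₁ ^ 2) ∧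
    (K - (1 / (2 * m)) • G ^ 2 = R₀) ∧
    (D - (1 / m) • (G * Px) - (1 / 2 : ℝ) • (1 : A)
      = (c - 1 / 2) • (1 : A) + 2 * (R₀ * u₁)) := by
  intro Pt K D Px G R₀
  refine ⟨?_, rfl, ?_⟩
  · have hPx : Px ^ 2 = m ^ 2 • u₂ ^ 2 + m • u₁ + (2 * m) • (r₂ * u₂ * u₁) + r₂ ^ 2 * u₁ ^ 2 :=
      smul_add_mul_sq_of_sub_eq_one m (sub_eq_zero.mp h12) h22 (sub_eq_zero.mp huu)
    simp only [Pt, R₀, hPx, add_mul, sub_mul, smul_mul_assoc, sq, mul_assoc]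
    match_scalars <;> field_simp <;> ring
  · simp only [D, G, Px, R₀, two_mul, mul_add, mul_sub, sub_mul, mul_smul_comm, smul_mul_assoc,
      sq, mul_assoc]
    match_scalars <;> field_simp; ring

/-- In the hat-representation of the Schrödinger algebra, built from combinatorial
raising operators `r₁, r₂` and lowering operators `u₁, u₂` with `[uᵢ,rⱼ] = δᵢⱼ`,
the subtractions `P̂ₜ - P̂ₓ²/(2m)`, `K̂ - Ĝ²/(2m)`, `D̂ - Ĝ·P̂ₓ/m - 1/2` are expressed
through `ℛ₀ = r₁ - r₂²/(2m)`. -/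
theorem schrodinger_hat_subtractions {A : Type*} [Ring A] [Algebra ℝ A]
    (c m : ℝ) (hm : m ≠ 0) (r₁ r₂ u₁ u₂ : A)
    (h11 : u₁ * r₁ - r₁ * u₁ = 1)
    (h22 : u₂ * r₂ - r₂ * u₂ = 1)
    (h12 : u₁ * r₂ - r₂ * u₁ = 0)
    (h21 : u₂ * r₁ - r₁ * u₂ = 0)
    (hrr : r₁ * r₂ - r₂ * r₁ = 0)
    (huu : u₁ * u₂ - u₂ * u₁ = 0) :
    let Pt : A := c • u₁ + (m / 2) • u₂ ^ 2 + (r₁ * u₁ + r₂ * u₂) * u₁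
    let K : A := r₁
    let D : A := c • (1 : A) + 2 * (r₁ * u₁) + r₂ * u₂
    let Px : A := m • u₂ + r₂ * u₁
    let G : A := r₂
    let R₀ : A := r₁ - (1 / (2 * m)) • r₂ ^ 2
    (Pt - (1 / (2 * m)) • Px ^ 2 = (c - 1 / 2) • u₁ + R₀ * u₁ ^ 2) ∧
    (K - (1 / (2 * m)) • G ^ 2 = R₀) ∧
    (D - (1 / m) • (G * Px) - (1 / 2 : ℝ) • (1 : A)
      = (c - 1 / 2) • (1 : A) + 2 * (R₀ * u₁)) :=
  schrodinger_hat_subtractions_general c m hm r₁ r₂ u₁ u₂ h22 h12 huu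
end

section
/- Let A be an associative unital algebra over ℝ, let c, m be real scalars with m ≠ 0, and let r₁, r₂, u₁, u₂ ∈ A satisfy the canonical commutation relations [uᵢ, rⱼ] = δᵢⱼ·1, [r₁,r₂] = 0, [u₁,u₂] = 0 (with [a,b] := ab − ba). Define P̂ₜ := c·u₁ + (m/2)·u₂² + (r₁u₁ + r₂u₂)u₁, K̂ := r₁, D̂ := c·1 + 2r₁u₁ + r₂u₂, P̂ₓ := m·u₂ + r₂u₁, Ĝ := r₂. Then these elements satisfy the Schrödinger commutation relations: [D̂,K̂] = 2K̂, [D̂,Ĝ] = Ĝ, [D̂,P̂ₓ] = −P̂ₓ, [D̂,P̂ₜ] = −2P̂ₜ, [P̂ₓ,K̂] = Ĝ, [P̂ₜ,K̂] = D̂, [P̂ₓ,Ĝ] = m·1, [P̂ₜ,Ĝ] = P̂ₓ, [Ĝ,K̂] = 0, [P̂ₜ,P̂ₓ] = 0. -/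
/-- The hat-representation operators built from combinatorial raising operators
`r₁, r₂` and lowering operators `u₁, u₂` (with `[uᵢ,rⱼ] = δᵢⱼ`) satisfy the
Schrödinger algebra commutation relations. -/
theorem schrodinger_hat_representation {A : Type*} [Ring A] [Algebra ℝ A]
    (c m : ℝ) (hm : m ≠ 0) (r₁ r₂ u₁ u₂ : A)
    (h11 : u₁ * r₁ - r₁ * u₁ = 1)
    (h22 : u₂ * r₂ - r₂ * u₂ = 1)
    (h12 : u₁ * r₂ - r₂ * u₁ = 0)
    (h21 : u₂ * r₁ - r₁ * u₂ = 0)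
    (hrr : r₁ * r₂ - r₂ * r₁ = 0)
    (huu : u₁ * u₂ - u₂ * u₁ = 0) :
    let Pt : A := c • u₁ + (m / 2) • u₂ ^ 2 + (r₁ * u₁ + r₂ * u₂) * u₁
    let K : A := r₁
    let D : A := c • (1 : A) + 2 * (r₁ * u₁) + r₂ * u₂
    let Px : A := m • u₂ + r₂ * u₁
    let G : A := r₂
    (D * K - K * D = 2 * K) ∧
    (D * G - G * D = G) ∧
    (D * Px - Px * D = -Px) ∧
    (D * Pt - Pt * D = -(2 * Pt)) ∧
    (Px * K - K * Px = G) ∧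
    (Pt * K - K * Pt = D) ∧
    (Px * G - G * Px = m • (1 : A)) ∧
    (Pt * G - G * Pt = Px) ∧
    (G * K - K * G = 0) ∧
    (Pt * Px - Px * Pt = 0) := by
  have e11 : u₁ * r₁ = r₁ * u₁ + 1 := by rw [← h11]; noncomm_ring
  have e22 : u₂ * r₂ = r₂ * u₂ + 1 := by rw [← h22]; noncomm_ring
  have e12 : u₁ * r₂ = r₂ * u₁ := by rw [← sub_eq_zero, h12]
  have e21 : u₂ * r₁ = r₁ * u₂ := by rw [← sub_eq_zero, h21]
  have err : r₂ * r₁ = r₁ * r₂ := by rw [← sub_eq_zero, ← neg_sub, neg_eq_zero, hrr]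
  have euu : u₂ * u₁ = u₁ * u₂ := by rw [← sub_eq_zero, ← neg_sub, neg_eq_zero, huu]
  have H11 : ∀ x : A, u₁ * (r₁ * x) = r₁ * (u₁ * x) + x := fun x => by
    rw [← mul_assoc, e11, add_mul, one_mul, mul_assoc]
  have H22 : ∀ x : A, u₂ * (r₂ * x) = r₂ * (u₂ * x) + x := fun x => by
    rw [← mul_assoc, e22, add_mul, one_mul, mul_assoc]
  have H12 : ∀ x : A, u₁ * (r₂ * x) = r₂ * (u₁ * x) := fun x => by
    rw [← mul_assoc, e12, mul_assoc]
  have H21 : ∀ x : A, u₂ * (r₁ * x) = r₁ * (u₂ * x) := fun x => by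
    rw [← mul_assoc, e21, mul_assoc]
  have Hrr : ∀ x : A, r₂ * (r₁ * x) = r₁ * (r₂ * x) := fun x => by
    rw [← mul_assoc, err, mul_assoc]
  have Huu : ∀ x : A, u₂ * (u₁ * x) = u₁ * (u₂ * x) := fun x => by
    rw [← mul_assoc, euu, mul_assoc]
  intro Pt K D Px G
  refine ⟨?_, ?_, ?_, ?_, ?_, ?_, ?_, ?_, ?_, ?_⟩ <;>
  · show _ = _
    simp only [Pt, K, D, Px, G, pow_two, mul_add, add_mul, sub_mul, mul_sub,
      smul_mul_assoc, mul_smul_comm, mul_one, one_mul, mul_assoc, two_mul, neg_add,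
      smul_add, neg_smul]
    simp only [H11, H22, H12, H21, Hrr, Huu, e11, e22, e12, e21, err, euu,
      mul_add, add_mul, mul_smul_comm, smul_mul_assoc, mul_one, one_mul, mul_assoc, smul_add]
    module
end

section
/- Let c, m be real numbers and define Υ(w₁,w₂,v₁,v₂) := (1 − w₁v₁)^{−c} · exp((m/2)·(w₁v₂² + 2w₂v₂ + w₂²v₁)/(1 − w₁v₁)) for real w₁, w₂, v₁, v₂ with w₁v₁ < 1. Then on this domain Υ satisfies the system of defining partial differential equations ∂Υ/∂w₁ = v₁²·∂Υ/∂v₁ + v₁v₂·∂Υ/∂v₂ + c·v₁·Υ + (m/2)·v₂²·Υ and ∂Υ/∂w₂ = v₁·∂Υ/∂v₂ + m·v₂·Υ. -/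
/-! Each partial derivative of `Υ = A ^ (-c) * exp (m / 2 * N / A)`, with `A = 1 - w₁ v₁` and
`N = w₁ v₂² + 2 w₂ v₂ + w₂² v₁`, is `Υ` times a rational function; in the `w₁`- and
`v₁`-directions its numerator collapses to a square, e.g. `v₂² A + v₁ N = (v₂ + w₂ v₁)²`.
Substituting these logarithmic derivatives turns both PDEs into identities between rational
functions with denominators powers of `A`. -/

/-- The Leibniz function of the Schrödinger algebra. -/
noncomputable def schrodingerLeibniz (c m w₁ w₂ v₁ v₂ : ℝ) : ℝ :=
  (1 - w₁ * v₁) ^ (-c) *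
    Real.exp ((m / 2) * (w₁ * v₂ ^ 2 + 2 * w₂ * v₂ + w₂ ^ 2 * v₁) / (1 - w₁ * v₁))

theorem HasDerivAt.rpow_const_mul_exp {f g : ℝ → ℝ} {f' g' x : ℝ} (p : ℝ)
    (hf : HasDerivAt f f' x) (hg : HasDerivAt g g' x) (hx : 0 < f x) :
    HasDerivAt (fun y => f y ^ p * Real.exp (g y))
      (f x ^ p * Real.exp (g x) * (p * f' / f x + g')) x := by
  refine ((hf.rpow_const (p := p) (Or.inl hx.ne')).mul hg.exp).congr_deriv ?_
  rw [Real.rpow_sub hx, Real.rpow_one]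
  field_simp

section PartialDerivatives

variable (c m : ℝ) {w₁ w₂ v₁ v₂ : ℝ}

theorem hasDerivAt_schrodingerLeibniz_w₁ (h : w₁ * v₁ < 1) :
    HasDerivAt (fun w => schrodingerLeibniz c m w w₂ v₁ v₂)
      (schrodingerLeibniz c m w₁ w₂ v₁ v₂ *
        (c * v₁ / (1 - w₁ * v₁) + m / 2 * ((v₂ + w₂ * v₁) / (1 - w₁ * v₁)) ^ 2)) w₁ := by
  have hA : 0 < 1 - w₁ * v₁ := by linarith
  have hA' : HasDerivAt (fun w => 1 - w * v₁) (-v₁) w₁ :=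
    ((hasDerivAt_id' w₁).mul_const v₁).const_sub 1 |>.congr_deriv (by ring)
  have hN : HasDerivAt (fun w => m / 2 * (w * v₂ ^ 2 + 2 * w₂ * v₂ + w₂ ^ 2 * v₁))
      (m / 2 * v₂ ^ 2) w₁ :=
    ((((hasDerivAt_id' w₁).mul_const (v₂ ^ 2)).add_const (2 * w₂ * v₂)).add_const
      (w₂ ^ 2 * v₁)).const_mul (m / 2) |>.congr_deriv (by ring)
  refine (hA'.rpow_const_mul_exp (-c) (hN.div hA' hA.ne') hA).congr_deriv ?_
  unfold schrodingerLeibniz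
  congr 1
  field_simp
  ring

theorem hasDerivAt_schrodingerLeibniz_v₁ (h : w₁ * v₁ < 1) :
    HasDerivAt (fun v => schrodingerLeibniz c m w₁ w₂ v v₂)
      (schrodingerLeibniz c m w₁ w₂ v₁ v₂ *
        (c * w₁ / (1 - w₁ * v₁) + m / 2 * ((w₂ + w₁ * v₂) / (1 - w₁ * v₁)) ^ 2)) v₁ := by
  have hA : 0 < 1 - w₁ * v₁ := by linarith
  have hA' : HasDerivAt (fun v => 1 - w₁ * v) (-w₁) v₁ :=
    ((hasDerivAt_id' v₁).const_mul w₁).const_sub 1 |>.congr_deriv (by ring)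
  have hN : HasDerivAt (fun v => m / 2 * (w₁ * v₂ ^ 2 + 2 * w₂ * v₂ + w₂ ^ 2 * v))
      (m / 2 * w₂ ^ 2) v₁ :=
    (((hasDerivAt_id' v₁).const_mul (w₂ ^ 2)).const_add (w₁ * v₂ ^ 2 + 2 * w₂ * v₂)).const_mul
      (m / 2) |>.congr_deriv (by ring)
  refine (hA'.rpow_const_mul_exp (-c) (hN.div hA' hA.ne') hA).congr_deriv ?_
  unfold schrodingerLeibniz
  congr 1
  field_simp
  ring

theorem hasDerivAt_schrodingerLeibniz_w₂ :
    HasDerivAt (fun w => schrodingerLeibniz c m w₁ w v₁ v₂)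
      (schrodingerLeibniz c m w₁ w₂ v₁ v₂ * (m * (v₂ + w₂ * v₁) / (1 - w₁ * v₁))) w₂ := by
  have hN : HasDerivAt (fun w => m / 2 * (w₁ * v₂ ^ 2 + 2 * w * v₂ + w ^ 2 * v₁))
      (m / 2 * (2 * v₂ + 2 * w₂ * v₁)) w₂ :=
    (((((hasDerivAt_id' w₂).const_mul 2).mul_const v₂).const_add (w₁ * v₂ ^ 2)).add
      ((hasDerivAt_pow 2 w₂).mul_const v₁)).const_mul (m / 2) |>.congr_deriv (by push_cast; ring)
  refine ((hN.div_const (1 - w₁ * v₁)).exp.const_mul ((1 - w₁ * v₁) ^ (-c))).congr_deriv ?_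
  unfold schrodingerLeibniz
  ring

theorem hasDerivAt_schrodingerLeibniz_v₂ :
    HasDerivAt (fun v => schrodingerLeibniz c m w₁ w₂ v₁ v)
      (schrodingerLeibniz c m w₁ w₂ v₁ v₂ * (m * (w₂ + w₁ * v₂) / (1 - w₁ * v₁))) v₂ := by
  have hN : HasDerivAt (fun v => m / 2 * (w₁ * v ^ 2 + 2 * w₂ * v + w₂ ^ 2 * v₁))
      (m / 2 * (2 * w₂ + 2 * w₁ * v₂)) v₂ :=
    (((((hasDerivAt_pow 2 v₂).const_mul w₁).add ((hasDerivAt_id' v₂).const_mul (2 * w₂))).add_const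
      (w₂ ^ 2 * v₁)).const_mul (m / 2)) |>.congr_deriv (by push_cast; ring)
  refine ((hN.div_const (1 - w₁ * v₁)).exp.const_mul ((1 - w₁ * v₁) ^ (-c))).congr_deriv ?_
  unfold schrodingerLeibniz
  ring

end PartialDerivatives

/-- The Schrödinger Leibniz function satisfies the system of defining PDEs
`∂Υ/∂w₁ = v₁²∂Υ/∂v₁ + v₁v₂∂Υ/∂v₂ + cv₁Υ + (m/2)v₂²Υ` and
`∂Υ/∂w₂ = v₁∂Υ/∂v₂ + mv₂Υ` on the domain `w₁v₁ < 1`. -/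
theorem schrodinger_leibniz_pde (c m : ℝ) (w₁ w₂ v₁ v₂ : ℝ) (h : w₁ * v₁ < 1) :
    (deriv (fun w => schrodingerLeibniz c m w w₂ v₁ v₂) w₁
      = v₁ ^ 2 * deriv (fun v => schrodingerLeibniz c m w₁ w₂ v v₂) v₁
        + v₁ * v₂ * deriv (fun v => schrodingerLeibniz c m w₁ w₂ v₁ v) v₂
        + c * v₁ * schrodingerLeibniz c m w₁ w₂ v₁ v₂
        + (m / 2) * v₂ ^ 2 * schrodingerLeibniz c m w₁ w₂ v₁ v₂) ∧
    (deriv (fun w => schrodingerLeibniz c m w₁ w v₁ v₂) w₂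
      = v₁ * deriv (fun v => schrodingerLeibniz c m w₁ w₂ v₁ v) v₂
        + m * v₂ * schrodingerLeibniz c m w₁ w₂ v₁ v₂) := by
  rw [(hasDerivAt_schrodingerLeibniz_w₁ c m h).deriv,
    (hasDerivAt_schrodingerLeibniz_v₁ c m h).deriv,
    (hasDerivAt_schrodingerLeibniz_w₂ c m).deriv, (hasDerivAt_schrodingerLeibniz_v₂ c m).deriv]
  set A := 1 - w₁ * v₁ with hA
  have hA₀ : A ≠ 0 := by linarith
  constructor <;> field_simp <;> rw [hA] <;> ring
end

section
/- Let A be a complete normed unital algebra (Banach algebra) over ℝ, let m be a real scalar, and let Pₓ, K, G ∈ A satisfy PₓK − KPₓ = G, PₓG − GPₓ = m·1, and KG − GK = 0. Then for all real a, b: exp(b·Pₓ) · exp(a·K) = e^{m·a·b²/2} · exp(a·K) · exp(a·b·G) · exp(b·Pₓ), where exp is the exponential defined by its power series in A. -/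
/-!
Conjugation by `exp (a • K)` turns `Pₓ` into `Pₓ + a • G`, so
`exp (b • Pₓ) * exp (a • K) = exp (a • K) * exp (b • (Pₓ + a • G))`. The commutator
`[Pₓ, a • G] = (m * a) • 1` is central, and for such a pair the Zassenhaus formula
`exp (t • (x + y)) = e^{c t² / 2} • exp (t • y) * exp (t • x)` is exact. Both commutation rules
follow from uniqueness of solutions of the linear equation `f' = x * f`.
-/

open NormedSpace

section

variable {A : Type*} [NormedRing A] [NormedAlgebra ℝ A] [CompleteSpace A]

theorem eq_exp_smul_mul_of_hasDerivAt {x : A} {f : ℝ → A}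
    (hf : ∀ t, HasDerivAt f (x * f t) t) (t : ℝ) : f t = exp (t • x) * f 0 := by
  have hexp : ∀ s, HasDerivAt (fun s : ℝ => exp (s • x) * f 0) (x * (exp (s • x) * f 0)) s :=
    fun s => by simpa only [mul_assoc] using (hasDerivAt_exp_smul_const' x s).mul_const (f 0)
  refine congrFun (ODE_solution_unique_univ (v := fun _ y => x * y) (s := fun _ => Set.univ)
    (t₀ := 0) (fun _ => (ContinuousLinearMap.mul ℝ A x).lipschitz.lipschitzOnWith)
    (fun s => ⟨hf s, trivial⟩) (fun s => ⟨hexp s, trivial⟩) ?_) t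
  simp

theorem mul_exp_smul_of_commute_commutator {x y z : A} (hxy : x * y - y * x = z)
    (hyz : Commute y z) (t : ℝ) : x * exp (t • y) = exp (t • y) * (x + t • z) := by
  have hd : ∀ s : ℝ, HasDerivAt (fun s : ℝ => x * exp (s • y) - exp (s • y) * (x + s • z))
      (y * (x * exp (s • y) - exp (s • y) * (x + s • z))) s := by
    intro s
    have he := hasDerivAt_exp_smul_const (𝕂 := ℝ) y s
    refine ((he.const_mul x).sub
      (he.mul (((hasDerivAt_id s).smul_const z).const_add x))).congr_deriv ?_
    have hey : exp (s • y) * y = y * exp (s • y) :=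
      ((Commute.refl y).smul_right s).exp_right.eq.symm
    have hez : exp (s • y) * z = z * exp (s • y) := (hyz.symm.smul_right s).exp_right.eq.symm
    simp only [id, one_smul]
    rw [hey, hez, ← mul_assoc x, sub_eq_iff_eq_add.mp hxy]
    noncomm_ring
  simpa [sub_eq_zero] using eq_exp_smul_mul_of_hasDerivAt hd t

theorem exp_smul_mul_of_semiconjBy {u x y : A} (h : SemiconjBy u y x) (t : ℝ) :
    exp (t • x) * u = u * exp (t • y) :=
  letI : NormedAlgebra ℚ A := NormedAlgebra.restrictScalars ℚ ℝ A
  (h.smul_right t).exp_right.eq.symm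

theorem exp_smul_add_of_commutator_eq_smul_one {x y : A} {c : ℝ}
    (hxy : x * y - y * x = c • (1 : A)) (t : ℝ) :
    exp (t • (x + y)) = Real.exp (c * t ^ 2 / 2) • (exp (t • y) * exp (t • x)) := by
  have hd : ∀ s : ℝ,
      HasDerivAt (fun s : ℝ => Real.exp (c * s ^ 2 / 2) • (exp (s • y) * exp (s • x)))
      ((x + y) * (Real.exp (c * s ^ 2 / 2) • (exp (s • y) * exp (s • x)))) s := by
    intro s
    have hgauss : HasDerivAt (fun s : ℝ => Real.exp (c * s ^ 2 / 2))
        (Real.exp (c * s ^ 2 / 2) * (c * s)) s := by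
      convert (((hasDerivAt_pow 2 s).const_mul c).div_const 2).exp using 1
      ring
    refine (hgauss.smul ((hasDerivAt_exp_smul_const' (𝕂 := ℝ) y s).mul
      (hasDerivAt_exp_smul_const (𝕂 := ℝ) x s))).congr_deriv ?_
    have hxe : x * exp (s • y) = exp (s • y) * (x + (s * c) • 1) := by
      rw [mul_smul]
      exact mul_exp_smul_of_commute_commutator hxy ((Commute.one_right y).smul_right c) s
    have hex : exp (s • x) * x = x * exp (s • x) :=
      ((Commute.refl x).smul_right s).exp_right.eq.symm
    rw [Pi.mul_apply, mul_smul_comm, add_mul, ← mul_assoc x, hxe]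
    simp only [mul_add, add_mul, smul_add, mul_smul_comm, smul_mul_assoc, mul_one, mul_assoc, hex,
      smul_smul]
    module
  simpa [eq_comm] using eq_exp_smul_mul_of_hasDerivAt hd t

end

/-- Exponential exchange identity (step 4 of the Schrödinger Leibniz formula) in a
real Banach algebra: if `[Pₓ,K] = G`, `[Pₓ,G] = m·1` and `[K,G] = 0`, then
`exp(bPₓ)·exp(aK) = e^{mab²/2} · exp(aK) · exp(abG) · exp(bPₓ)`. -/
theorem schrodinger_exchange_Px_K {A : Type*} [NormedRing A] [NormedAlgebra ℝ A]
    [CompleteSpace A] (m : ℝ) (Px K G : A)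
    (h1 : Px * K - K * Px = G) (h2 : Px * G - G * Px = m • (1 : A))
    (h3 : K * G - G * K = 0) (a b : ℝ) :
    NormedSpace.exp (b • Px) * NormedSpace.exp (a • K)
      = Real.exp (m * a * b ^ 2 / 2) • (NormedSpace.exp (a • K) * NormedSpace.exp ((a * b) • G) * NormedSpace.exp (b • Px)) := by
  have hPE : Px * exp (a • K) = exp (a • K) * (Px + a • G) :=
    mul_exp_smul_of_commute_commutator h1 (sub_eq_zero.mp h3) a
  have hPG : Px * (a • G) - a • G * Px = (m * a) • (1 : A) := by
    rw [mul_smul_comm, smul_mul_assoc, ← smul_sub, h2, smul_smul, mul_comm]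
  calc exp (b • Px) * exp (a • K)
      = exp (a • K) * exp (b • (Px + a • G)) := exp_smul_mul_of_semiconjBy hPE.symm b
    _ = exp (a • K) * (Real.exp (m * a * b ^ 2 / 2) • (exp (b • a • G) * exp (b • Px))) := by
      rw [exp_smul_add_of_commutator_eq_smul_one hPG]
    _ = _ := by rw [mul_smul_comm, smul_smul, mul_comm b a, ← mul_assoc]
end

section
/- Let c, m be real numbers with m ≠ 0 and consider the polynomial ring ℝ[v₁,v₂] in two variables. Define the ℝ-linear operators on ℝ[v₁,v₂]: Ř₀ := ∂/∂v₁ − (1/(2m))·∂²/∂v₂², Ľ₀ := (c − 1/2)·(multiplication by v₁) + (multiplication by v₁²) ∘ Ř₀, and ρ̌₀ := (c − 1/2)·id + 2·(multiplication by v₁) ∘ Ř₀. Then these operators satisfy the sl(2) relations [Ř₀, Ľ₀] = ρ̌₀, [Ř₀, ρ̌₀] = 2·Ř₀, and [ρ̌₀, Ľ₀] = 2·Ľ₀, where [A,B] := A∘B − B∘A. -/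
open MvPolynomial

/-!
If `R * M = M * R + 1` in an associative algebra (as for `∂/∂v₁` and multiplication by `v₁`),
then `R`, `a • M + M ^ 2 * R` and `a • 1 + 2 • (M * R)` span a copy of `sl(2)`: normal ordering,
i.e. moving every `R` to the right of every `M` with the canonical commutation relation, reduces
each bracket to the claimed element. The operator `Ř₀` differs from `∂/∂v₁` by a multiple of
`∂²/∂v₂²`, which commutes with multiplication by `v₁`, so it satisfies the same relation.
-/

namespace CanonicalCommutation

variable {K A : Type*} [CommSemiring K] [Ring A] [Algebra K A]

def raising (a : K) (M R : A) : A := a • M + M ^ 2 * R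

def cartan (a : K) (M R : A) : A := a • 1 + 2 • (M * R)

variable (a : K) {R M : A} (h : R * M = M * R + 1)
include h

theorem mul_mul_eq_mul_mul_add (x : A) : R * (M * x) = M * (R * x) + x := by
  rw [← mul_assoc, h, add_mul, mul_assoc, one_mul]

theorem commutator_lowering_raising :
    R * raising a M R - raising a M R * R = cartan a M R := by
  simp only [raising, cartan, sq, mul_add, add_mul, mul_assoc, smul_mul_assoc, mul_smul_comm,
    h, mul_mul_eq_mul_mul_add h, smul_add, two_smul]
  abel

theorem commutator_lowering_cartan : R * cartan a M R - cartan a M R * R = 2 • R := by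
  simp only [cartan, mul_add, add_mul, mul_assoc, smul_mul_assoc, mul_smul_comm,
    mul_one, one_mul, mul_mul_eq_mul_mul_add h, two_smul]
  abel

theorem commutator_cartan_raising :
    cartan a M R * raising a M R - raising a M R * cartan a M R = 2 • raising a M R := by
  simp only [raising, cartan, sq, mul_add, add_mul, mul_assoc, smul_mul_assoc, mul_smul_comm,
    mul_one, one_mul, h, mul_mul_eq_mul_mul_add h, smul_add, smul_smul, two_smul]
  abel

end CanonicalCommutation

namespace MvPolynomial

variable {σ R : Type*} [CommSemiring R]

theorem pderiv_mul_mulLeft_X_self (i : σ) :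
    ((pderiv i).toLinearMap : Module.End R (MvPolynomial σ R)) * LinearMap.mulLeft R (X i) =
      LinearMap.mulLeft R (X i) * (pderiv i).toLinearMap + 1 := by
  refine LinearMap.ext fun p => ?_
  simp [add_comm]

theorem commute_pderiv_mulLeft_X_of_ne {i j : σ} (h : j ≠ i) :
    Commute ((pderiv i).toLinearMap : Module.End R (MvPolynomial σ R))
      (LinearMap.mulLeft R (X j)) := by
  refine LinearMap.ext fun p => ?_
  simp [pderiv_X_of_ne h]

end MvPolynomial

open CanonicalCommutation in
theorem schrodinger_check_sl2_general (c m : ℝ) :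
    let P := MvPolynomial (Fin 2) ℝ
    let d₁ : Module.End ℝ P := (pderiv (0 : Fin 2)).toLinearMap
    let d₂ : Module.End ℝ P := (pderiv (1 : Fin 2)).toLinearMap
    let mulv₁ : Module.End ℝ P := LinearMap.mulLeft ℝ (X 0)
    let mulv₁sq : Module.End ℝ P := LinearMap.mulLeft ℝ (X 0 ^ 2)
    let R₀ : Module.End ℝ P := d₁ - (1 / (2 * m)) • (d₂ * d₂)
    let L₀ : Module.End ℝ P := (c - 1 / 2) • mulv₁ + mulv₁sq * R₀
    let ρ₀ : Module.End ℝ P := (c - 1 / 2) • (1 : Module.End ℝ P) + 2 • (mulv₁ * R₀)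
    (R₀ * L₀ - L₀ * R₀ = ρ₀) ∧
    (R₀ * ρ₀ - ρ₀ * R₀ = 2 • R₀) ∧
    (ρ₀ * L₀ - L₀ * ρ₀ = 2 • L₀) := by
  intro P d₁ d₂ mulv₁ mulv₁sq R₀ L₀ ρ₀
  have hd₂ : Commute (d₂ * d₂) mulv₁ :=
    have := commute_pderiv_mulLeft_X_of_ne (R := ℝ) (i := (1 : Fin 2)) (j := 0) (by decide)
    this.mul_left this
  have hd₁ : d₁ * mulv₁ = mulv₁ * d₁ + 1 := pderiv_mul_mulLeft_X_self 0
  have hR₀ : R₀ * mulv₁ = mulv₁ * R₀ + 1 := by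
    simp only [R₀, sub_mul, mul_sub, smul_mul_assoc, mul_smul_comm, hd₂.eq, hd₁]
    abel
  have hL₀ : L₀ = raising (c - 1 / 2) mulv₁ R₀ := by
    rw [raising, LinearMap.pow_mulLeft]
  rw [hL₀]
  exact ⟨commutator_lowering_raising _ hR₀, commutator_lowering_cartan _ hR₀,
    commutator_cartan_raising _ hR₀⟩

/-- The check-realization of the subtracted Schrödinger elements as differential
operators on ℝ[v₁,v₂]: with `Ř₀ = ∂/∂v₁ − (1/(2m))∂²/∂v₂²`,
`Ľ₀ = (c−1/2)v₁ + v₁²·Ř₀`, `ρ̌₀ = (c−1/2) + 2v₁·Ř₀`, one has the sl(2) relations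
`[Ř₀,Ľ₀] = ρ̌₀`, `[Ř₀,ρ̌₀] = 2Ř₀`, `[ρ̌₀,Ľ₀] = 2Ľ₀`. -/
theorem schrodinger_check_sl2 (c m : ℝ) (hm : m ≠ 0) :
    let P := MvPolynomial (Fin 2) ℝ
    let d₁ : Module.End ℝ P := (pderiv (0 : Fin 2)).toLinearMap
    let d₂ : Module.End ℝ P := (pderiv (1 : Fin 2)).toLinearMap
    let mulv₁ : Module.End ℝ P := LinearMap.mulLeft ℝ (X 0)
    let mulv₁sq : Module.End ℝ P := LinearMap.mulLeft ℝ (X 0 ^ 2)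
    let R₀ : Module.End ℝ P := d₁ - (1 / (2 * m)) • (d₂ * d₂)
    let L₀ : Module.End ℝ P := (c - 1 / 2) • mulv₁ + mulv₁sq * R₀
    let ρ₀ : Module.End ℝ P := (c - 1 / 2) • (1 : Module.End ℝ P) + 2 • (mulv₁ * R₀)
    (R₀ * L₀ - L₀ * R₀ = ρ₀) ∧
    (R₀ * ρ₀ - ρ₀ * R₀ = 2 • R₀) ∧
    (ρ₀ * L₀ - L₀ * ρ₀ = 2 • L₀) :=
  schrodinger_check_sl2_general c m
end
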